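/- Let m ≥ 2 be an even natural number. The equation ü − u + u^m = 0 has precisely one homoclinic solution up to translations. This solution is positive everywhere, symmetric about a point z₀, monotone increasing on (−∞, z₀] and monotone decreasing on [z₀, ∞). -/

import Mathlib

/-!
The solitary wave is `C · sech (a z) ^ (2 / (m - 1))` with `a = (m - 1) / 2` and
`C ^ (m - 1) = (m + 1) / 2`; a direct computation shows it is a homoclinic solution.

Conversely, a homoclinic solution conserves the energy `u̇² - u² + 2 u^(m+1) / (m + 1)`, which
vanishes at infinity, so at every critical point where `u ≠ 0` we get `u ^ (m - 1) = (m + 1) / 2`.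
For even `m` the power `m - 1` is odd, so `u` has no negative minimum, hence `u ≥ 0`, and its
maximum is exactly `C`. At that maximum `u` and a translate of the soliton have the same value and
slope; both solve `ü = u - u^m` with values in `[0, C]`, where the right-hand side is Lipschitz,
so they coincide by uniqueness for the ODE.
-/

open Filter Topology Set

/-- A homoclinic solution of the travelling-wave generalised KdV equation
`ü − u + u^m = 0`: a nonconstant `C²` solution with `u, u̇ → 0` as `z → ±∞`. -/
def IsHomoclinicKdV (m : ℕ) (u : ℝ → ℝ) : Prop :=
  ContDiff ℝ 2 u ∧
  (∀ z : ℝ, deriv (deriv u) z - u z + (u z) ^ m = 0) ∧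
  (∃ z w : ℝ, u z ≠ u w) ∧
  Tendsto u atTop (𝓝 0) ∧ Tendsto u atBot (𝓝 0) ∧
  Tendsto (deriv u) atTop (𝓝 0) ∧ Tendsto (deriv u) atBot (𝓝 0)

open Real

theorem abs_le_cosh (x : ℝ) : |x| ≤ cosh x :=
  (self_le_sinh_iff.2 (abs_nonneg x)).trans ((sinh_lt_cosh _).le.trans_eq (cosh_abs x))

theorem abs_sinh_mul_cosh_rpow_le (p x : ℝ) : |sinh x * cosh x ^ (p - 1)| ≤ cosh x ^ p := by
  have hc := cosh_pos x
  rw [abs_mul, abs_of_pos (rpow_pos_of_pos hc _)]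
  calc |sinh x| * cosh x ^ (p - 1) ≤ cosh x * cosh x ^ (p - 1) := by
        gcongr
        rw [abs_sinh, ← cosh_abs x]
        exact (sinh_lt_cosh _).le
    _ = cosh x ^ p := by rw [mul_comm, ← rpow_add_one hc.ne', sub_add_cancel]

theorem tendsto_cosh_mul_cocompact {a : ℝ} (ha : a ≠ 0) :
    Tendsto (fun z => cosh (a * z)) (cocompact ℝ) atTop := by
  refine tendsto_atTop_mono (fun z => abs_le_cosh (a * z)) ?_
  simp only [abs_mul]
  exact tendsto_norm_cocompact_atTop.const_mul_atTop (abs_pos.2 ha)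

section CoshRpow

variable (a p : ℝ)

theorem hasDerivAt_cosh_mul_rpow (z : ℝ) :
    HasDerivAt (fun z => cosh (a * z) ^ p) (p * a * (sinh (a * z) * cosh (a * z) ^ (p - 1))) z :=
  ((hasDerivAt_const_mul a).cosh.rpow_const (Or.inl (cosh_pos _).ne')).congr_deriv (by ring)

theorem hasDerivAt_sinh_mul_mul_cosh_mul_rpow (z : ℝ) :
    HasDerivAt (fun z => sinh (a * z) * cosh (a * z) ^ (p - 1))
      (a * (p * cosh (a * z) ^ p - (p - 1) * cosh (a * z) ^ (p - 2))) z := by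
  have hl : HasDerivAt (fun z => a * z) a z := hasDerivAt_const_mul a
  refine (hl.sinh.mul (hl.cosh.rpow_const (p := p - 1) (Or.inl (cosh_pos _).ne'))).congr_deriv ?_
  have hc := cosh_pos (a * z)
  have e1 : cosh (a * z) ^ p = cosh (a * z) ^ (p - 2) * cosh (a * z) ^ 2 := by
    rw [← rpow_natCast, ← rpow_add hc]; ring_nf
  have e2 : cosh (a * z) ^ (p - 1) = cosh (a * z) ^ (p - 2) * cosh (a * z) := by
    rw [← rpow_add_one hc.ne']; ring_nf
  rw [e1, e2, show p - 1 - 1 = p - 2 by ring]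
  linear_combination (a * (p - 1) * cosh (a * z) ^ (p - 2)) * sinh_sq (a * z)

end CoshRpow

noncomputable def kdvRate (m : ℕ) : ℝ := ((m : ℝ) - 1) / 2

noncomputable def kdvAmplitude (m : ℕ) : ℝ := (((m : ℝ) + 1) / 2) ^ ((m : ℝ) - 1)⁻¹

noncomputable def kdvSoliton (m : ℕ) (z : ℝ) : ℝ :=
  kdvAmplitude m * cosh (kdvRate m * z) ^ (-(kdvRate m)⁻¹)

noncomputable def kdvSolitonDeriv (m : ℕ) (z : ℝ) : ℝ :=
  -kdvAmplitude m * (sinh (kdvRate m * z) * cosh (kdvRate m * z) ^ (-(kdvRate m)⁻¹ - 1))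

section Soliton

variable {m : ℕ}

theorem kdvAmplitude_pos : 0 < kdvAmplitude m := by
  unfold kdvAmplitude; positivity

theorem kdvSoliton_pos (z : ℝ) : 0 < kdvSoliton m z :=
  mul_pos kdvAmplitude_pos (rpow_pos_of_pos (cosh_pos _) _)

theorem kdvSoliton_zero : kdvSoliton m 0 = kdvAmplitude m := by
  simp [kdvSoliton]

theorem kdvSolitonDeriv_zero : kdvSolitonDeriv m 0 = 0 := by
  simp [kdvSolitonDeriv]

theorem kdvSoliton_neg (z : ℝ) : kdvSoliton m (-z) = kdvSoliton m z := by
  simp [kdvSoliton]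

theorem contDiff_kdvSoliton : ContDiff ℝ 2 (kdvSoliton m) :=
  contDiff_const.mul ((contDiff_const.mul contDiff_id).cosh.rpow_const_of_ne
    fun _ => (cosh_pos _).ne')

variable (hm : 1 < m)
include hm

theorem kdvRate_pos : 0 < kdvRate m := by
  have : (1 : ℝ) < m := by exact_mod_cast hm
  unfold kdvRate; linarith

theorem kdvAmplitude_pow_sub_one : kdvAmplitude m ^ (m - 1) = ((m : ℝ) + 1) / 2 := by
  have hm' : (1 : ℝ) < m := by exact_mod_cast hm
  rw [kdvAmplitude, ← rpow_natCast, ← rpow_mul (by positivity), Nat.cast_sub (by omega),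
    Nat.cast_one, inv_mul_cancel₀ (by linarith), rpow_one]

theorem hasDerivAt_kdvSoliton (z : ℝ) : HasDerivAt (kdvSoliton m) (kdvSolitonDeriv m z) z := by
  have ha := (kdvRate_pos hm).ne'
  refine ((hasDerivAt_cosh_mul_rpow _ _ z).const_mul (kdvAmplitude m)).congr_deriv ?_
  rw [kdvSolitonDeriv, neg_mul, inv_mul_cancel₀ ha]
  ring

theorem hasDerivAt_kdvSolitonDeriv (z : ℝ) :
    HasDerivAt (kdvSolitonDeriv m) (kdvSoliton m z - kdvSoliton m z ^ m) z := by
  have ha := (kdvRate_pos hm).ne'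
  refine ((hasDerivAt_sinh_mul_mul_cosh_mul_rpow _ _ z).const_mul (-kdvAmplitude m)).congr_deriv ?_
  have hc := cosh_pos (kdvRate m * z)
  have hm1 : (m : ℝ) = 2 * kdvRate m + 1 := by rw [kdvRate]; ring
  have hpow : kdvSoliton m z ^ m =
      (1 + kdvRate m) * kdvAmplitude m * cosh (kdvRate m * z) ^ (-(kdvRate m)⁻¹ - 2) := by
    rw [kdvSoliton, mul_pow, ← rpow_natCast (cosh _ ^ _), ← rpow_mul hc.le,
      ← pow_sub_one_mul (by omega), kdvAmplitude_pow_sub_one hm, hm1]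
    congr 2
    · ring
    · linear_combination (-2) * mul_inv_cancel₀ ha
  rw [hpow, kdvSoliton]
  set a := kdvRate m
  set c := cosh (a * z)
  linear_combination kdvAmplitude m * (c ^ (-a⁻¹) - c ^ (-a⁻¹ - 2)) * mul_inv_cancel₀ ha

theorem deriv_kdvSoliton : deriv (kdvSoliton m) = kdvSolitonDeriv m :=
  funext fun z => (hasDerivAt_kdvSoliton hm z).deriv

theorem kdvSoliton_le_of_abs_le {x y : ℝ} (h : |x| ≤ |y|) : kdvSoliton m y ≤ kdvSoliton m x := by
  have ha := kdvRate_pos hm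
  refine mul_le_mul_of_nonneg_left (rpow_le_rpow_of_nonpos (cosh_pos _) ?_ ?_) kdvAmplitude_pos.le
  · rw [cosh_le_cosh, abs_mul, abs_mul]; gcongr
  · simp [ha.le]

theorem kdvSoliton_lt_of_abs_lt {x y : ℝ} (h : |x| < |y|) : kdvSoliton m y < kdvSoliton m x := by
  have ha := kdvRate_pos hm
  refine mul_lt_mul_of_pos_left (rpow_lt_rpow_of_neg (cosh_pos _) ?_ ?_) kdvAmplitude_pos
  · rw [cosh_lt_cosh, abs_mul, abs_mul]; gcongr
  · simp [ha]

theorem tendsto_kdvSoliton_cocompact : Tendsto (kdvSoliton m) (cocompact ℝ) (𝓝 0) := by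
  have h := ((tendsto_rpow_neg_atTop (inv_pos.2 (kdvRate_pos hm))).comp
    (tendsto_cosh_mul_cocompact (kdvRate_pos hm).ne')).const_mul (kdvAmplitude m)
  rwa [mul_zero] at h

theorem tendsto_kdvSolitonDeriv_cocompact :
    Tendsto (kdvSolitonDeriv m) (cocompact ℝ) (𝓝 0) := by
  refine squeeze_zero_norm (fun z => ?_) (tendsto_kdvSoliton_cocompact hm)
  rw [kdvSolitonDeriv, norm_mul, norm_neg, Real.norm_of_nonneg kdvAmplitude_pos.le, kdvSoliton]
  exact mul_le_mul_of_nonneg_left (abs_sinh_mul_cosh_rpow_le _ _) kdvAmplitude_pos.le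

theorem isHomoclinicKdV_kdvSoliton : IsHomoclinicKdV m (kdvSoliton m) := by
  have h := tendsto_kdvSoliton_cocompact hm
  have h' := deriv_kdvSoliton hm ▸ tendsto_kdvSolitonDeriv_cocompact hm
  refine ⟨contDiff_kdvSoliton, fun z => ?_, ⟨1, 0, (kdvSoliton_lt_of_abs_lt hm (by simp)).ne⟩,
    h.mono_left atTop_le_cocompact, h.mono_left atBot_le_cocompact,
    h'.mono_left atTop_le_cocompact, h'.mono_left atBot_le_cocompact⟩
  rw [deriv_kdvSoliton hm, (hasDerivAt_kdvSolitonDeriv hm z).deriv]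
  ring

end Soliton

theorem Continuous.exists_forall_ge_of_tendsto_cocompact_zero {β : Type*} [TopologicalSpace β]
    {f : β → ℝ} (hf : Continuous f) (hlim : Tendsto f (cocompact β) (𝓝 0)) {x₀ : β}
    (hx₀ : 0 < f x₀) : ∃ x, ∀ y, f y ≤ f x :=
  hf.exists_forall_ge' x₀ ((hlim.eventually (gt_mem_nhds hx₀)).mono fun _ => le_of_lt)

theorem sq_deriv_sub_eq_of_deriv_deriv_eq {F f u : ℝ → ℝ} (hF : ∀ x, HasDerivAt F (f x) x)
    (hu : Differentiable ℝ u) (hu' : Differentiable ℝ (deriv u))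
    (h : ∀ z, deriv (deriv u) z = f (u z)) (z w : ℝ) :
    deriv u z ^ 2 - 2 * F (u z) = deriv u w ^ 2 - 2 * F (u w) := by
  have hE (x : ℝ) : HasDerivAt (fun z => deriv u z ^ 2 - 2 * F (u z)) 0 x := by
    refine (((hu' x).hasDerivAt.pow 2).sub (((hF (u x)).comp x (hu x).hasDerivAt).const_mul 2))
      |>.congr_deriv ?_
    rw [h]; ring
  exact is_const_of_deriv_eq_zero (fun x => (hE x).differentiableAt) (fun x => (hE x).deriv) z w

theorem ODE_second_order_solution_unique {F : ℝ → ℝ} {S : Set ℝ} {K : NNReal}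
    (hF : LipschitzOnWith K F S) {u u' v v' : ℝ → ℝ}
    (hu : ∀ t, HasDerivAt u (u' t) t) (hu' : ∀ t, HasDerivAt u' (F (u t)) t) (huS : ∀ t, u t ∈ S)
    (hv : ∀ t, HasDerivAt v (v' t) t) (hv' : ∀ t, HasDerivAt v' (F (v t)) t) (hvS : ∀ t, v t ∈ S)
    {t₀ : ℝ} (h₀ : u t₀ = v t₀) (h₀' : u' t₀ = v' t₀) : u = v := by
  have hlip : LipschitzOnWith (max 1 K) (fun p : ℝ × ℝ => (p.2, F p.1)) (S ×ˢ univ) :=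
    LipschitzWith.prod_snd.lipschitzOnWith.prodMk
      ((hF.comp LipschitzWith.prod_fst.lipschitzOnWith fun _ hp => hp.1).weaken (by simp))
  have h := ODE_solution_unique_univ (v := fun _ p => (p.2, F p.1)) (fun _ => hlip)
    (fun t => ⟨(hu t).prodMk (hu' t), huS t, trivial⟩)
    (fun t => ⟨(hv t).prodMk (hv' t), hvS t, trivial⟩) (Prod.ext h₀ h₀')
  exact funext fun t => congrArg Prod.fst (congrFun h t)

namespace IsHomoclinicKdV

variable {m : ℕ} {u : ℝ → ℝ} (hu : IsHomoclinicKdV m u)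
include hu

theorem differentiable : Differentiable ℝ u :=
  hu.1.differentiable (by norm_num)

theorem differentiable_deriv : Differentiable ℝ (deriv u) :=
  hu.1.differentiable_deriv_two

theorem deriv_deriv (z : ℝ) : deriv (deriv u) z = u z - u z ^ m := by
  linarith [hu.2.1 z]

theorem tendsto_cocompact : Tendsto u (cocompact ℝ) (𝓝 0) := by
  rw [cocompact_eq_atBot_atTop]
  exact tendsto_sup.2 ⟨hu.2.2.2.2.1, hu.2.2.2.1⟩

theorem sq_deriv (z : ℝ) : deriv u z ^ 2 = u z ^ 2 - 2 / (m + 1) * u z ^ (m + 1) := by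
  set F : ℝ → ℝ := fun x => x ^ 2 / 2 - x ^ (m + 1) / (m + 1)
  have hF (x : ℝ) : HasDerivAt F (x - x ^ m) x := by
    refine (((hasDerivAt_pow 2 x).div_const 2).sub ((hasDerivAt_pow (m + 1) x).div_const _))
      |>.congr_deriv ?_
    field_simp
    push_cast
    ring
  have hE := sq_deriv_sub_eq_of_deriv_deriv_eq hF hu.differentiable hu.differentiable_deriv
    hu.deriv_deriv z
  obtain ⟨-, -, -, hu_top, -, hu'_top, -⟩ := hu
  have hlim : Tendsto (fun w => deriv u w ^ 2 - 2 * F (u w)) atTop (𝓝 (0 ^ 2 - 2 * F 0)) :=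
    (hu'_top.pow 2).sub (((hF 0).continuousAt.tendsto.comp hu_top).const_mul 2)
  have h0 := tendsto_nhds_unique (tendsto_const_nhds.congr hE) hlim
  norm_num [F] at h0
  field_simp at h0 ⊢
  linarith

theorem pow_sub_one_eq_of_deriv_eq_zero (hm : m ≠ 0) {z : ℝ} (hz : deriv u z = 0)
    (hz' : u z ≠ 0) : u z ^ (m - 1) = ((m : ℝ) + 1) / 2 := by
  have h := hu.sq_deriv z
  rw [hz, show m + 1 = (m - 1) + 2 by omega, pow_add] at h
  have h2 : u z ^ 2 ≠ 0 := pow_ne_zero 2 hz'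
  field_simp at h ⊢
  apply mul_right_cancel₀ h2
  linarith

theorem nonneg (hm : m ≠ 0) (he : Even m) (z : ℝ) : 0 ≤ u z := by
  by_contra! hz
  obtain ⟨z₁, hz₁⟩ := Continuous.exists_forall_ge_of_tendsto_cocompact_zero (f := fun x => -u x)
    hu.differentiable.continuous.neg (by simpa using hu.tendsto_cocompact.neg) (neg_pos.2 hz)
  have hmin : IsLocalMin u z₁ := Filter.Eventually.of_forall fun y => neg_le_neg_iff.1 (hz₁ y)
  have hneg : u z₁ < 0 := by linarith [hz₁ z]
  have h := hu.pow_sub_one_eq_of_deriv_eq_zero hm hmin.deriv_eq_zero hneg.ne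
  have hodd : Odd (m - 1) := Nat.Even.sub_odd (by omega) he odd_one
  have : u z₁ ^ (m - 1) < 0 := hodd.pow_neg hneg
  linarith [h, (by positivity : (0 : ℝ) < ((m : ℝ) + 1) / 2)]

theorem exists_max_eq_kdvAmplitude (hm : 1 < m) (he : Even m) :
    ∃ z₀, u z₀ = kdvAmplitude m ∧ deriv u z₀ = 0 ∧ ∀ z, u z ≤ kdvAmplitude m := by
  obtain ⟨z₁, hz₁⟩ : ∃ z, 0 < u z := by
    by_contra! h
    obtain ⟨z, w, hzw⟩ := hu.2.2.1
    have h0 (x : ℝ) : u x = 0 := (h x).antisymm (hu.nonneg (by omega) he x)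
    exact hzw (by rw [h0, h0])
  obtain ⟨z₀, hz₀⟩ :=
    hu.differentiable.continuous.exists_forall_ge_of_tendsto_cocompact_zero hu.tendsto_cocompact hz₁
  have hd : deriv u z₀ = 0 := IsLocalMax.deriv_eq_zero (Eventually.of_forall hz₀)
  have hpos : 0 < u z₀ := hz₁.trans_le (hz₀ z₁)
  have hval : u z₀ = kdvAmplitude m := by
    have h := hu.pow_sub_one_eq_of_deriv_eq_zero (by omega) hd hpos.ne'
    rw [← kdvAmplitude_pow_sub_one hm] at h
    exact (pow_left_inj₀ hpos.le kdvAmplitude_pos.le (by omega)).1 h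
  exact ⟨z₀, hval, hd, hval ▸ hz₀⟩

theorem exists_eq_kdvSoliton_comp_add (hm : 1 < m) (he : Even m) :
    ∃ c, u = fun z => kdvSoliton m (z + c) := by
  obtain ⟨z₀, hval, hd, hle⟩ := hu.exists_max_eq_kdvAmplitude hm he
  have hF : ContDiff ℝ 1 fun x : ℝ => x - x ^ m := by fun_prop
  obtain ⟨K, hK⟩ := (hF.locallyLipschitz.locallyLipschitzOn (s := Icc 0 (kdvAmplitude m)))
    |>.exists_lipschitzOnWith_of_compact isCompact_Icc
  refine ⟨-z₀, ODE_second_order_solution_unique (F := fun x => x - x ^ m) hK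
    (fun t => (hu.differentiable t).hasDerivAt)
    (fun t => hu.deriv_deriv t ▸ (hu.differentiable_deriv t).hasDerivAt)
    (fun t => ⟨hu.nonneg (by omega) he t, hle t⟩)
    (fun t => (hasDerivAt_kdvSoliton hm _).comp_add_const t (-z₀))
    (fun t => (hasDerivAt_kdvSolitonDeriv hm _).comp_add_const t (-z₀))
    (fun t => ⟨(kdvSoliton_pos _).le,
      kdvSoliton_zero (m := m) ▸ kdvSoliton_le_of_abs_le hm (by simp)⟩)
    (t₀ := z₀) ?_ ?_⟩
  · simp [hval, kdvSoliton_zero]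
  · simp [hd, kdvSolitonDeriv_zero]

end IsHomoclinicKdV

/-- For even `m ≥ 2` the equation `ü − u + u^m = 0` has precisely one homoclinic
solution up to translations; it is positive, symmetric about a point `z₀`,
monotone increasing on `(−∞, z₀]` and monotone decreasing on `[z₀, ∞)`. -/
theorem kdv_homoclinic_even (m : ℕ) (hm : 2 ≤ m) (hmeven : Even m) :
    ∃ (h : ℝ → ℝ) (z₀ : ℝ),
      IsHomoclinicKdV m h ∧
      (∀ z : ℝ, 0 < h z) ∧
      (∀ z : ℝ, h (z₀ + z) = h (z₀ - z)) ∧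
      MonotoneOn h (Set.Iic z₀) ∧
      AntitoneOn h (Set.Ici z₀) ∧
      (∀ u : ℝ → ℝ, IsHomoclinicKdV m u → ∃ c : ℝ, u = fun z => h (z + c)) := by
  refine ⟨kdvSoliton m, 0, isHomoclinicKdV_kdvSoliton hm, kdvSoliton_pos,
    fun z => by rw [zero_sub, kdvSoliton_neg, zero_add], ?_, ?_,
    fun u hu => hu.exists_eq_kdvSoliton_comp_add hm hmeven⟩
  · exact fun x _ y hy hxy => kdvSoliton_le_of_abs_le hm (abs_le_abs_of_nonpos hy hxy)
  · exact fun x hx y _ hxy => kdvSoliton_le_of_abs_le hm (abs_le_abs_of_nonneg hx hxy)
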